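/- arXiv:2005.02871 — 10 statements merged into one kernel-verified Lean document; each statement's English description precedes it below -/
import Mathlib

section
/- Let N ≥ 1, let A and X be N×N complex matrices, and let θ be a real number. Then e^(−θ/2) · ∫₀¹ e^(θs) · exp(s·A) · (X·A − A·X − θ·X) · exp((1−s)·A) ds = e^(−θ/2) · X · exp(A) − e^(θ/2) · exp(A) · X, where exp denotes the matrix exponential and the integral is the Bochner integral of a matrix-valued function on [0,1]. -/
/-!
Write `F θ s = e^(θs) exp(sA) X exp((1-s)A)`. Differentiating the three factors, the
derivative of `F θ` is `e^(θs) exp(sA) (AX - XA + θX) exp((1-s)A)`, i.e. minus the integrand,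
so the fundamental theorem of calculus gives `F θ 0 - F θ 1 = X exp A - e^θ exp A X`;
multiplying by `e^(-θ/2)` yields the claim.
-/

open scoped Matrix.Norms.L2Operator

open NormedSpace

variable {𝔸 : Type*} [NormedRing 𝔸] [NormedAlgebra ℝ 𝔸] [CompleteSpace 𝔸]

theorem hasDerivAt_exp_one_sub_smul_const (A : 𝔸) (s : ℝ) :
    HasDerivAt (fun t : ℝ => exp ((1 - t) • A)) (-(A * exp ((1 - s) • A))) s := by
  have h := (hasDerivAt_exp_smul_const' A (1 - s)).scomp s ((hasDerivAt_id s).const_sub 1)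
  simpa only [Function.comp_def, neg_one_smul] using h

theorem hasDerivAt_exp_smul_mul_mul_exp_one_sub_smul (A X : 𝔸) (θ s : ℝ) :
    HasDerivAt (fun t : ℝ => Real.exp (θ * t) • (exp (t • A) * X * exp ((1 - t) • A)))
      (Real.exp (θ * s) • (exp (s • A) * (A * X - X * A + θ • X) * exp ((1 - s) • A))) s := by
  have hscalar : HasDerivAt (fun t : ℝ => Real.exp (θ * t)) (Real.exp (θ * s) * θ) s := by
    simpa only [mul_one] using ((hasDerivAt_id' s).const_mul θ).exp
  have hprod := ((hasDerivAt_exp_smul_const A s).mul_const X).fun_mul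
    (hasDerivAt_exp_one_sub_smul_const A s)
  refine (hscalar.fun_smul hprod).congr_deriv ?_
  simp only [mul_add, add_mul, mul_sub, sub_mul, mul_smul_comm, smul_mul_assoc, mul_assoc,
    mul_neg, smul_add, smul_sub, smul_neg, smul_smul]
  abel

@[fun_prop]
theorem Continuous.exp_smul_const {α : Type*} [TopologicalSpace α] {f : α → ℝ}
    (hf : Continuous f) (A : 𝔸) : Continuous fun a => exp (f a • A) :=
  (differentiable_exp_smul_const ℝ A).continuous.comp hf

theorem integral_exp_smul_mul_commutator_mul_exp_one_sub_smul (A X : 𝔸) (θ : ℝ) :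
    ∫ s in (0:ℝ)..1, Real.exp (θ * s) •
        (exp (s • A) * (X * A - A * X - θ • X) * exp ((1 - s) • A))
      = X * exp A - Real.exp θ • (exp A * X) := by
  have hderiv (s : ℝ) : HasDerivAt
      (fun t : ℝ => -(Real.exp (θ * t) • (exp (t • A) * X * exp ((1 - t) • A))))
      (Real.exp (θ * s) • (exp (s • A) * (X * A - A * X - θ • X) * exp ((1 - s) • A))) s := by
    refine (hasDerivAt_exp_smul_mul_mul_exp_one_sub_smul A X θ s).fun_neg.congr_deriv ?_
    rw [← smul_neg, ← neg_mul, ← mul_neg]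
    congr 3
    abel
  have hcont : Continuous fun s : ℝ => Real.exp (θ * s) •
      (exp (s • A) * (X * A - A * X - θ • X) * exp ((1 - s) • A)) := by
    fun_prop
  rw [intervalIntegral.integral_eq_sub_of_hasDerivAt (fun s _ => hderiv s)
    (hcont.intervalIntegrable 0 1)]
  simp only [mul_zero, mul_one, zero_smul, one_smul, sub_self, sub_zero, exp_zero, Real.exp_zero,
    one_mul, sub_neg_eq_add]
  abel

theorem integral_exp_commutator_eq_general (N : ℕ)
    (A X : Matrix (Fin N) (Fin N) ℂ) (θ : ℝ) :
    Real.exp (-θ/2) •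
      (∫ s in (0:ℝ)..1, Real.exp (θ * s) •
        (exp (s • A) * (X * A - A * X - (θ : ℂ) • X) * exp ((1 - s) • A)))
    = Real.exp (-θ/2) • (X * exp A) - Real.exp (θ/2) • (exp A * X) := by
  rw [Complex.coe_smul, integral_exp_smul_mul_commutator_mul_exp_one_sub_smul, smul_sub, smul_smul,
    ← Real.exp_add, show -θ / 2 + θ = θ / 2 by ring]

/-- For N×N complex matrices `A`, `X` and a real number `θ`,
`e^(−θ/2) ∫₀¹ e^(θs) exp(sA) (XA − AX − θX) exp((1−s)A) ds
  = e^(−θ/2) X exp(A) − e^(θ/2) exp(A) X`. -/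
theorem integral_exp_commutator_eq (N : ℕ) (hN : 1 ≤ N)
    (A X : Matrix (Fin N) (Fin N) ℂ) (θ : ℝ) :
    Real.exp (-θ/2) •
      (∫ s in (0:ℝ)..1, Real.exp (θ * s) •
        (exp (s • A) * (X * A - A * X - (θ : ℂ) • X) * exp ((1 - s) • A)))
    = Real.exp (-θ/2) • (X * exp A) - Real.exp (θ/2) • (exp A * X) :=
  integral_exp_commutator_eq_general N A X θ
end

section
/- Let N ≥ 1, let p : Fin N → ℝ with pₙ > 0 for all n, let ρ be the diagonal N×N complex matrix with diagonal entries pₙ, let θ ∈ ℝ, and let X be any N×N complex matrix. Define the tilted operator [ρ]_θ(X) := e^(−θ/2) · ∫₀¹ e^(sθ) · D(s) · X · D(1−s) ds, where D(s) is the diagonal matrix with entries pₙ^s. Then for every pair of indices n, m, the (n,m) entry of [ρ]_θ(X) equals Φ(e^(θ/2)·pₙ, e^(−θ/2)·pₘ) · Xₙₘ, where Φ is the logarithmic mean. -/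
/-! Since `D(s)` is diagonal, the `(n,m)` entry of the integrand is the scalar
`e^(sθ) pₙ^s pₘ^(1-s) Xₙₘ`. Splitting `e^(-θ/2) e^(sθ) = e^(sθ/2) e^(-(1-s)θ/2)` turns the
integral into `∫₀¹ a^s b^(1-s) ds` with `a = e^(θ/2) pₙ`, `b = e^(-θ/2) pₘ`, and writing
`a^s b^(1-s) = b e^(s log(a/b))` shows that this integral is the logarithmic mean of `a` and `b`. -/

open scoped Matrix.Norms.L2Operator

noncomputable def logMean (x y : ℝ) : ℝ :=
  if x = y then x else (x - y) / (Real.log x - Real.log y)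

theorem Matrix.intervalIntegral_apply {m n : Type*} [Fintype m] [Fintype n]
    [DecidableEq n] {f : ℝ → Matrix m n ℂ} {a b : ℝ}
    (hf : IntervalIntegrable f MeasureTheory.volume a b) (i : m) (j : n) :
    (∫ s in a..b, f s) i j = ∫ s in a..b, f s i j :=
  ((Matrix.entryLinearMap ℝ ℂ i j).toContinuousLinearMap.intervalIntegral_comp_comm hf).symm

theorem integral_rpow_mul_rpow_one_sub {a b : ℝ} (ha : 0 < a) (hb : 0 < b) :
    ∫ s in (0:ℝ)..1, a ^ s * b ^ (1 - s) = logMean a b := by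
  have hexp : ∀ s : ℝ, a ^ s * b ^ (1 - s) = b * Real.exp (s * (Real.log a - Real.log b)) := by
    intro s
    rw [Real.rpow_def_of_pos ha, Real.rpow_def_of_pos hb, ← Real.exp_add,
      ← Real.exp_log hb, ← Real.exp_add, Real.log_exp]
    ring_nf
  simp_rw [hexp, intervalIntegral.integral_const_mul, logMean]
  split_ifs with hab
  · simp [hab]
  · have hlog : Real.log a - Real.log b ≠ 0 :=
      sub_ne_zero.2 fun h => hab (Real.log_injOn_pos ha hb h)
    rw [intervalIntegral.integral_comp_mul_right _ hlog, integral_exp, zero_mul, one_mul,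
      Real.exp_zero, Real.exp_sub, Real.exp_log ha, Real.exp_log hb, smul_eq_mul]
    field_simp

theorem exp_mul_rpow_mul_rpow_one_sub {a b : ℝ} (ha : 0 ≤ a) (hb : 0 ≤ b) (θ s : ℝ) :
    Real.exp (-θ / 2) * (Real.exp (s * θ) * (a ^ s * b ^ (1 - s)))
      = (Real.exp (θ / 2) * a) ^ s * (Real.exp (-θ / 2) * b) ^ (1 - s) := by
  rw [Real.mul_rpow (Real.exp_pos _).le ha, Real.mul_rpow (Real.exp_pos _).le hb,
    ← Real.exp_mul, ← Real.exp_mul]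
  have hsplit : Real.exp (-θ / 2) * Real.exp (s * θ)
      = Real.exp (θ / 2 * s) * Real.exp (-θ / 2 * (1 - s)) := by
    rw [← Real.exp_add, ← Real.exp_add]
    ring_nf
  linear_combination (a ^ s * b ^ (1 - s)) * hsplit

theorem tilted_diagonal_entry_general (N : ℕ) (p : Fin N → ℝ) (hp : ∀ n, 0 < p n)
    (θ : ℝ) (X : Matrix (Fin N) (Fin N) ℂ) (n m : Fin N) :
    (Real.exp (-θ/2) •
      ∫ s in (0:ℝ)..1, Real.exp (s * θ) •
        (Matrix.diagonal (fun k => ((p k ^ s : ℝ) : ℂ)) * X *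
          Matrix.diagonal (fun k => ((p k ^ (1 - s) : ℝ) : ℂ)))) n m
    = (logMean (Real.exp (θ/2) * p n) (Real.exp (-θ/2) * p m) : ℂ) * X n m := by
  have hcont : Continuous fun s : ℝ => Real.exp (s * θ) •
      (Matrix.diagonal (fun k => ((p k ^ s : ℝ) : ℂ)) * X *
        Matrix.diagonal (fun k => ((p k ^ (1 - s) : ℝ) : ℂ))) := by
    fun_prop (disch := exact (hp _).ne')
  rw [Matrix.smul_apply, Matrix.intervalIntegral_apply (hcont.intervalIntegrable 0 1),
    ← integral_rpow_mul_rpow_one_sub (mul_pos (Real.exp_pos _) (hp n))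
      (mul_pos (Real.exp_pos _) (hp m)),
    ← intervalIntegral.integral_ofReal, ← intervalIntegral.integral_mul_const,
    ← intervalIntegral.integral_smul]
  refine intervalIntegral.integral_congr fun s _ => ?_
  simp only [← exp_mul_rpow_mul_rpow_one_sub (hp n).le (hp m).le, Matrix.smul_apply,
    Matrix.mul_diagonal, Matrix.diagonal_mul, Complex.real_smul]
  push_cast
  ring

/-- For a diagonal density matrix `ρ = diag(p)` with positive entries, the `(n,m)` entry of the
tilted operator `[ρ]_θ(X) = e^(−θ/2) ∫₀¹ e^(sθ) D(s) X D(1−s) ds` (where `D(s) = diag(pₖ^s)`)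
equals `Φ(e^(θ/2)·pₙ, e^(−θ/2)·pₘ) · Xₙₘ`. -/
theorem tilted_diagonal_entry (N : ℕ) (hN : 1 ≤ N) (p : Fin N → ℝ) (hp : ∀ n, 0 < p n)
    (θ : ℝ) (X : Matrix (Fin N) (Fin N) ℂ) (n m : Fin N) :
    (Real.exp (-θ/2) •
      ∫ s in (0:ℝ)..1, Real.exp (s * θ) •
        (Matrix.diagonal (fun k => ((p k ^ s : ℝ) : ℂ)) * X *
          Matrix.diagonal (fun k => ((p k ^ (1 - s) : ℝ) : ℂ)))) n m
    = (logMean (Real.exp (θ/2) * p n) (Real.exp (-θ/2) * p m) : ℂ) * X n m :=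
  tilted_diagonal_entry_general N p hp θ X n m
end

section
/- Let N ≥ 1, let A be a Hermitian N×N complex matrix, set ρ = exp(A), let θ ∈ ℝ, and let X, ξ, ν be arbitrary N×N complex matrices. Then Tr(ξ† · [X, [ρ]_θ([X†, ν])]) is the complex conjugate of Tr(ν† · [X, [ρ]_θ([X†, ξ])]), where [·,·] denotes the matrix commutator. -/
open scoped Matrix.Norms.L2Operator

open Matrix

/-- The tilted operator `[ρ]_θ(X)` for `ρ = exp(A)`:
`[ρ]_θ(X) = e^(−θ/2) ∫₀¹ e^(sθ) exp(sA) X exp((1−s)A) ds`. -/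
noncomputable def tilted {N : ℕ} (A : Matrix (Fin N) (Fin N) ℂ) (θ : ℝ)
    (X : Matrix (Fin N) (Fin N) ℂ) : Matrix (Fin N) (Fin N) ℂ :=
  Real.exp (-θ/2) • ∫ s in (0:ℝ)..1, Real.exp (s * θ) •
    (NormedSpace.exp (s • A) * X * NormedSpace.exp ((1 - s) • A))

/-!
Moving the outer commutator with `X` across the trace turns both sides into the form
`Tr(B [ρ]_θ(C))`, and `[Xᴴ, ξ]ᴴ = [ξᴴ, X]`. So it suffices that
`Tr(B [ρ]_θ(C)) = conj Tr(Cᴴ [ρ]_θ(Bᴴ))`. This holds already for the integrands: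
`Tr(B e^{sA} C e^{(1-s)A}) = conj Tr(Cᴴ e^{sA} Bᴴ e^{(1-s)A})` since `e^{tA}` is Hermitian and
the trace is cyclic; trace and complex conjugation both commute with the integral.
-/

theorem Matrix.trace_mul_commutator {n R : Type*} [Fintype n] [CommRing R]
    (B X T : Matrix n n R) :
    trace (B * (X * T - T * X)) = trace ((B * X - X * B) * T) := by
  rw [mul_sub, sub_mul, trace_sub, trace_sub, mul_assoc, ← mul_assoc B T, trace_mul_cycle]

theorem Matrix.trace_mul_sandwich_eq_star {n R : Type*} [Fintype n] [CommRing R] [StarRing R]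
    {P Q : Matrix n n R} (hP : P.IsHermitian) (hQ : Q.IsHermitian) (B C : Matrix n n R) :
    trace (B * (P * C * Q)) = star (trace (Cᴴ * (P * Bᴴ * Q))) := by
  rw [← trace_conjTranspose]
  simp only [conjTranspose_mul, conjTranspose_conjTranspose, hP.eq, hQ.eq, mul_assoc]
  rw [trace_mul_comm Q]
  simp only [mul_assoc]

theorem Matrix.trace_mul_intervalIntegral {n : Type*} [Fintype n] [DecidableEq n]
    (B : Matrix n n ℂ) {f : ℝ → Matrix n n ℂ} {a b : ℝ}
    (hf : IntervalIntegrable f MeasureTheory.volume a b) :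
    trace (B * ∫ s in a..b, f s) = ∫ s in a..b, trace (B * f s) :=
  (LinearMap.toContinuousLinearMap
    ((traceLinearMap n ℂ ℂ).comp (LinearMap.mulLeft ℂ B))).intervalIntegral_comp_comm hf |>.symm

theorem intervalIntegral.integral_conj {f : ℝ → ℂ} {a b : ℝ} :
    ∫ s in a..b, starRingEnd ℂ (f s) = starRingEnd ℂ (∫ s in a..b, f s) :=
  Complex.conjLIE.toLinearIsometry.intervalIntegral_comp_comm f

theorem continuous_tilted_integrand {n : Type*} [Fintype n] [DecidableEq n]
    (A C : Matrix n n ℂ) (θ : ℝ) :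
    Continuous fun s : ℝ => Real.exp (s * θ) •
      (NormedSpace.exp (s • A) * C * NormedSpace.exp ((1 - s) • A)) := by
  -- `NormedSpace.exp_continuous` is stated for normed `ℚ`-algebras
  let +nondep : NormedAlgebra ℚ (Matrix n n ℂ) := .restrictScalars ℚ ℂ _
  fun_prop

theorem trace_mul_tilted {N : ℕ} (A B C : Matrix (Fin N) (Fin N) ℂ) (θ : ℝ) :
    trace (B * tilted A θ C) = Real.exp (-θ / 2) • ∫ s in (0 : ℝ)..1, Real.exp (s * θ) •
      trace (B * (NormedSpace.exp (s • A) * C * NormedSpace.exp ((1 - s) • A))) := by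
  rw [tilted, mul_smul_comm, trace_smul,
    trace_mul_intervalIntegral _ ((continuous_tilted_integrand A C θ).intervalIntegrable 0 1)]
  simp only [mul_smul_comm, trace_smul]

theorem trace_mul_tilted_eq_conj {N : ℕ} {A : Matrix (Fin N) (Fin N) ℂ} (hA : A.IsHermitian)
    (θ : ℝ) (B C : Matrix (Fin N) (Fin N) ℂ) :
    trace (B * tilted A θ C) = starRingEnd ℂ (trace (Cᴴ * tilted A θ Bᴴ)) := by
  have hexp (t : ℝ) : (NormedSpace.exp (t • A)).IsHermitian :=
    (hA.smul (IsSelfAdjoint.all t)).exp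
  rw [trace_mul_tilted, trace_mul_tilted, ← Complex.conjLIE_apply, map_smul,
    Complex.conjLIE_apply, ← intervalIntegral.integral_conj]
  congr 1
  refine intervalIntegral.integral_congr fun s _ => ?_
  rw [← Complex.conjLIE_apply, map_smul, Complex.conjLIE_apply]
  exact congrArg _ (trace_mul_sandwich_eq_star (hexp s) (hexp (1 - s)) B C)

theorem trace_commutator_tilted_conj_symm_general (N : ℕ)
    (A : Matrix (Fin N) (Fin N) ℂ) (hA : A.IsHermitian) (θ : ℝ)
    (X ξ ν : Matrix (Fin N) (Fin N) ℂ) :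
    Matrix.trace (ξᴴ *
        (X * tilted A θ (Xᴴ * ν - ν * Xᴴ) - tilted A θ (Xᴴ * ν - ν * Xᴴ) * X))
    = starRingEnd ℂ (Matrix.trace (νᴴ *
        (X * tilted A θ (Xᴴ * ξ - ξ * Xᴴ) - tilted A θ (Xᴴ * ξ - ξ * Xᴴ) * X))) := by
  rw [trace_mul_commutator, trace_mul_commutator, trace_mul_tilted_eq_conj hA]
  simp only [conjTranspose_sub, conjTranspose_mul, conjTranspose_conjTranspose]

/-- Conjugate symmetry: `Tr(ξ† [X, [ρ]_θ([X†, ν])])` is the complex conjugate of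
`Tr(ν† [X, [ρ]_θ([X†, ξ])])`, where `ρ = exp(A)` with `A` Hermitian. -/
theorem trace_commutator_tilted_conj_symm (N : ℕ) (hN : 1 ≤ N)
    (A : Matrix (Fin N) (Fin N) ℂ) (hA : A.IsHermitian) (θ : ℝ)
    (X ξ ν : Matrix (Fin N) (Fin N) ℂ) :
    Matrix.trace (ξᴴ *
        (X * tilted A θ (Xᴴ * ν - ν * Xᴴ) - tilted A θ (Xᴴ * ν - ν * Xᴴ) * X))
    = starRingEnd ℂ (Matrix.trace (νᴴ *
        (X * tilted A θ (Xᴴ * ξ - ξ * Xᴴ) - tilted A θ (Xᴴ * ξ - ξ * Xᴴ) * X))) :=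
  trace_commutator_tilted_conj_symm_general N A hA θ X ξ ν
end

section
/- Let N ≥ 1, let A be a Hermitian N×N complex matrix, set ρ = exp(A), let θ ∈ ℝ, and let X be any N×N complex matrix. Then the conjugate transpose of [ρ]_θ(X) equals [ρ]_{−θ}(X†), i.e., ([ρ]_θ(X))† = [ρ]_{−θ}(X†). -/
open scoped Matrix.Norms.L2Operator

open Matrix

/-! Writing the weight as `e^((s - 1/2)θ)`, the adjoint of the integrand at `s` is the integrand
for `Xᴴ` with the two exponentials `exp(sA)`, `exp((1-s)A)` swapped (they are Hermitian because
`s` is real); the reflection `s ↦ 1 - s` of `[0, 1]` swaps them back and turns the weight into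
`e^((s - 1/2)(-θ))`. -/

theorem star_intervalIntegral {E : Type*} [NormedAddCommGroup E] [NormedSpace ℝ E]
    [CompleteSpace E] [StarAddMonoid E] [StarModule ℝ E] [ContinuousStar E] (f : ℝ → E) (a b : ℝ)
    (μ : MeasureTheory.Measure ℝ) :
    star (∫ s in a..b, f s ∂μ) = ∫ s in a..b, star (f s) ∂μ := by
  have h (s : Set ℝ) : star (∫ x in s, f x ∂μ) = ∫ x in s, star (f x) ∂μ :=
    ((starL' ℝ : E ≃L[ℝ] E).integral_comp_comm f).symm
  simp only [intervalIntegral, star_sub, h]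

theorem Matrix.IsHermitian.conjTranspose_exp_smul_mul_mul_exp_smul {n : Type*} [Fintype n]
    [DecidableEq n] {A : Matrix n n ℂ} (hA : A.IsHermitian) (X : Matrix n n ℂ) (s t : ℝ) :
    (NormedSpace.exp (s • A) * X * NormedSpace.exp (t • A))ᴴ =
      NormedSpace.exp (t • A) * Xᴴ * NormedSpace.exp (s • A) := by
  have hexp : ∀ r : ℝ, (NormedSpace.exp (r • A))ᴴ = NormedSpace.exp (r • A) := fun r =>
    ((hA.smul (IsSelfAdjoint.all r)).exp).eq
  rw [conjTranspose_mul, conjTranspose_mul, hexp, hexp, mul_assoc]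

theorem tilted_eq_integral {N : ℕ} (A : Matrix (Fin N) (Fin N) ℂ) (θ : ℝ)
    (X : Matrix (Fin N) (Fin N) ℂ) :
    tilted A θ X = ∫ s in (0:ℝ)..1, Real.exp ((s - 1 / 2) * θ) •
      (NormedSpace.exp (s • A) * X * NormedSpace.exp ((1 - s) • A)) := by
  rw [tilted, ← intervalIntegral.integral_smul]
  congr 1 with s
  rw [smul_smul, ← Real.exp_add]
  ring_nf

theorem tilted_conjTranspose_general (N : ℕ)
    (A : Matrix (Fin N) (Fin N) ℂ) (hA : A.IsHermitian) (θ : ℝ)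
    (X : Matrix (Fin N) (Fin N) ℂ) :
    (tilted A θ X)ᴴ = tilted A (-θ) Xᴴ := by
  set g : ℝ → Matrix (Fin N) (Fin N) ℂ := fun s => Real.exp ((s - 1 / 2) * θ) •
    (NormedSpace.exp (s • A) * X * NormedSpace.exp ((1 - s) • A))
  calc (tilted A θ X)ᴴ = ∫ s in (0:ℝ)..1, (g s)ᴴ := by
        rw [tilted_eq_integral, ← star_eq_conjTranspose, star_intervalIntegral]; rfl
    _ = ∫ s in (0:ℝ)..1, (g (1 - s))ᴴ := by
        rw [intervalIntegral.integral_comp_sub_left (fun s => (g s)ᴴ)]; norm_num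
    _ = tilted A (-θ) Xᴴ := by
        rw [tilted_eq_integral]
        congr 1 with s
        rw [conjTranspose_smul, hA.conjTranspose_exp_smul_mul_mul_exp_smul, sub_sub_cancel,
          star_trivial]
        ring_nf

/-- `([ρ]_θ(X))† = [ρ]_{−θ}(X†)` for `ρ = exp(A)` with `A` Hermitian. -/
theorem tilted_conjTranspose (N : ℕ) (hN : 1 ≤ N)
    (A : Matrix (Fin N) (Fin N) ℂ) (hA : A.IsHermitian) (θ : ℝ)
    (X : Matrix (Fin N) (Fin N) ℂ) :
    (tilted A θ X)ᴴ = tilted A (-θ) Xᴴ :=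
  tilted_conjTranspose_general N A hA θ X
end

section
/- Let N ≥ 1, let A be a Hermitian N×N complex matrix with Tr(exp(A)) = 1, set ρ = exp(A), let θ ∈ ℝ, and let X be any N×N complex matrix. Then the real part of Tr(X† · [ρ]_θ(X)) satisfies Re Tr(X† · [ρ]_θ(X)) ≤ (1/2) · (e^(θ/2) + e^(−θ/2)) · ‖X‖², where ‖X‖ is the ℓ²→ℓ² operator norm (spectral norm) of X. -/
/-!
Diagonalize `A = U diag(λ) U*`, put `Y = U* X U` and `p i = exp (λ i)`, a probability vector.
Then `Re Tr(X† exp(sA) X exp((1-s)A)) = ∑ p_i^s p_j^(1-s) |Y_ij|²`, and weighted AM-GM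
`p_i^s p_j^(1-s) ≤ s p_i + (1-s) p_j`, together with the fact that rows and columns of `Y` have
squared length at most `‖Y‖² = ‖X‖²`, bounds this by `‖X‖²` for every `s ∈ [0,1]`.
Integrating against `exp(sθ)` and using the Hermite-Hadamard bound
`∫₀¹ exp(sθ) ds ≤ (1 + exp θ)/2` gives the claim.
-/

open scoped Matrix.Norms.L2Operator

open Matrix

open Finset

namespace Matrix

variable {𝕜 : Type*} [RCLike 𝕜] {m n : Type*} [Fintype m] [Fintype n]

theorem sum_sq_norm_col_le_l2_opNorm_sq [DecidableEq n] (Y : Matrix m n 𝕜) (j : n) :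
    ∑ i, ‖Y i j‖ ^ 2 ≤ ‖Y‖ ^ 2 := by
  have h := Y.l2_opNorm_mulVec (EuclideanSpace.single j 1)
  rw [PiLp.norm_single, norm_one, mul_one] at h
  calc ∑ i, ‖Y i j‖ ^ 2
      = ‖(EuclideanSpace.equiv m 𝕜).symm (Y *ᵥ EuclideanSpace.single j 1)‖ ^ 2 := by
        simp [EuclideanSpace.norm_sq_eq, mulVec_single]
    _ ≤ ‖Y‖ ^ 2 := by gcongr

theorem sum_sq_norm_row_le_l2_opNorm_sq [DecidableEq m] [DecidableEq n] (Y : Matrix m n 𝕜)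
    (i : m) :
    ∑ j, ‖Y i j‖ ^ 2 ≤ ‖Y‖ ^ 2 := by
  simpa [l2_opNorm_conjTranspose] using Yᴴ.sum_sq_norm_col_le_l2_opNorm_sq i

theorem sum_sum_rpow_mul_rpow_mul_sq_norm_le [DecidableEq n] (Y : Matrix n n 𝕜) {p : n → ℝ}
    (hp : 0 ≤ p) (hp1 : ∑ i, p i = 1) {s : ℝ} (hs0 : 0 ≤ s) (hs1 : s ≤ 1) :
    ∑ i, ∑ j, p i ^ s * p j ^ (1 - s) * ‖Y i j‖ ^ 2 ≤ ‖Y‖ ^ 2 :=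
  calc ∑ i, ∑ j, p i ^ s * p j ^ (1 - s) * ‖Y i j‖ ^ 2
      ≤ ∑ i, ∑ j, (s * p i + (1 - s) * p j) * ‖Y i j‖ ^ 2 := by
        gcongr with i _ j
        exact Real.geom_mean_le_arith_mean2_weighted hs0 (by linarith) (hp i) (hp j)
          (by ring)
    _ = s * ∑ i, p i * ∑ j, ‖Y i j‖ ^ 2 + (1 - s) * ∑ j, p j * ∑ i, ‖Y i j‖ ^ 2 := by
        simp only [add_mul, sum_add_distrib, mul_sum, mul_assoc]
        rw [sum_comm (s := univ) (t := univ) (f := fun i j => (1 - s) * (p j * ‖Y i j‖ ^ 2))]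
    _ ≤ s * ∑ i, p i * ‖Y‖ ^ 2 + (1 - s) * ∑ j, p j * ‖Y‖ ^ 2 := by
        have hs1' : 0 ≤ 1 - s := by linarith
        gcongr with i _ j _
        · exact hp i
        · exact Y.sum_sq_norm_row_le_l2_opNorm_sq i
        · exact hp j
        · exact Y.sum_sq_norm_col_le_l2_opNorm_sq j
    _ = ‖Y‖ ^ 2 := by rw [← sum_mul, hp1]; ring

theorem re_trace_conjTranspose_mul_diagonal_mul_mul_diagonal [DecidableEq n] (Y : Matrix n n 𝕜)
    (a b : n → ℝ) :
    RCLike.re (trace (Yᴴ * (diagonal (fun i => (a i : 𝕜)) * Y * diagonal (fun j => (b j : 𝕜)))))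
      = ∑ i, ∑ j, a i * b j * ‖Y i j‖ ^ 2 := by
  simp only [trace, diag, mul_apply, diagonal_apply, ite_mul, mul_ite, zero_mul, mul_zero,
    sum_ite_eq, sum_ite_eq', mem_univ, if_true, conjTranspose_apply, map_sum]
  rw [sum_comm]
  refine sum_congr rfl fun i _ => sum_congr rfl fun j _ => ?_
  rw [show star (Y i j) * (a i * Y i j * b j) = ((a i * b j : ℝ) : 𝕜) * (star (Y i j) * Y i j) by
    push_cast; ring, RCLike.star_def, RCLike.conj_mul]
  norm_cast

theorem trace_conjStarAlgAut [DecidableEq n] (U : unitary (Matrix n n 𝕜)) (M : Matrix n n 𝕜) :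
    trace (Unitary.conjStarAlgAut 𝕜 _ U M) = trace M := by
  rw [Unitary.conjStarAlgAut_apply, trace_mul_cycle, Unitary.coe_star_mul_self, one_mul]

theorem IsHermitian.exp_smul_eq [DecidableEq n] {A : Matrix n n ℂ} (hA : A.IsHermitian) (r : ℝ) :
    NormedSpace.exp (r • A) = Unitary.conjStarAlgAut ℂ _ hA.eigenvectorUnitary
      (diagonal fun i => ((Real.exp (hA.eigenvalues i) ^ r : ℝ) : ℂ)) := by
  rw [← CFC.real_exp_eq_normedSpace_exp, ← cfc_comp_smul r Real.exp A, hA.cfc_eq, IsHermitian.cfc]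
  simp only [Function.comp_def, smul_eq_mul, ← Real.exp_mul, mul_comm r]
  rfl

theorem IsHermitian.re_trace_mul_exp_smul_mul_exp_smul_le [DecidableEq n] {A : Matrix n n ℂ}
    (hA : A.IsHermitian) (htr : trace (NormedSpace.exp A) = 1) (X : Matrix n n ℂ) {s : ℝ}
    (hs0 : 0 ≤ s) (hs1 : s ≤ 1) :
    (trace (Xᴴ * (NormedSpace.exp (s • A) * X * NormedSpace.exp ((1 - s) • A)))).re ≤ ‖X‖ ^ 2 := by
  have hp1 : ∑ i, Real.exp (hA.eigenvalues i) = 1 := by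
    rw [← one_smul ℝ A, hA.exp_smul_eq, trace_conjStarAlgAut, trace_diagonal] at htr
    simpa [Complex.exp_ofReal_re] using congrArg Complex.re htr
  rw [hA.exp_smul_eq, hA.exp_smul_eq]
  set U := hA.eigenvectorUnitary
  set φ := Unitary.conjStarAlgAut ℂ _ U
  obtain ⟨Y, rfl⟩ : ∃ Y, φ Y = X := ⟨φ.symm X, φ.apply_symm_apply X⟩
  have hφY : ‖φ Y‖ = ‖Y‖ := by
    rw [Unitary.conjStarAlgAut_apply, CStarRing.norm_mul_mem_unitary _ (Unitary.star_mem U.2),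
      CStarRing.norm_mem_unitary_mul _ U.2]
  rw [← star_eq_conjTranspose, ← map_star φ Y, ← map_mul φ, ← map_mul φ, ← map_mul φ,
    trace_conjStarAlgAut, hφY]
  exact (re_trace_conjTranspose_mul_diagonal_mul_mul_diagonal Y _ _).trans_le
    (Y.sum_sum_rpow_mul_rpow_mul_sq_norm_le (fun i => (Real.exp_pos _).le) hp1 hs0 hs1)

theorem re_trace_mul_intervalIntegral [DecidableEq n] (M : Matrix n n ℂ) {f : ℝ → Matrix n n ℂ}
    {a b : ℝ} (hf : IntervalIntegrable f MeasureTheory.volume a b) :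
    (trace (M * ∫ s in a..b, f s)).re = ∫ s in a..b, (trace (M * f s)).re :=
  let L : Matrix n n ℂ →ₗ[ℝ] ℝ :=
    Complex.reLm.comp ((traceLinearMap n ℝ ℂ).comp (LinearMap.mulLeft ℝ M))
  (L.toContinuousLinearMap.intervalIntegral_comp_comm hf).symm

end Matrix

open Set in
theorem ConvexOn.intervalIntegral_unitInterval_le {f : ℝ → ℝ} (hf : ConvexOn ℝ (Icc 0 1) f)
    (hint : IntervalIntegrable f MeasureTheory.volume 0 1) :
    ∫ s in (0 : ℝ)..1, f s ≤ (f 0 + f 1) / 2 :=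
  calc ∫ s in (0 : ℝ)..1, f s ≤ ∫ s in (0 : ℝ)..1, (f 0 + s * (f 1 - f 0)) := by
        refine intervalIntegral.integral_mono_on zero_le_one hint
          (Continuous.intervalIntegrable (by fun_prop) 0 1) fun s ⟨hs0, hs1⟩ => ?_
        have := hf.2 (left_mem_Icc.2 zero_le_one) (right_mem_Icc.2 zero_le_one)
          (sub_nonneg.2 hs1) hs0 (sub_add_cancel 1 s)
        simp only [smul_eq_mul, mul_zero, mul_one, zero_add] at this
        linarith
    _ = (f 0 + f 1) / 2 := by
        rw [intervalIntegral.integral_add intervalIntegrable_const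
          (Continuous.intervalIntegrable (by fun_prop) 0 1), intervalIntegral.integral_const,
          intervalIntegral.integral_mul_const, integral_id]
        norm_num
        ring

theorem Real.intervalIntegral_exp_mul_le (θ : ℝ) :
    ∫ s in (0 : ℝ)..1, Real.exp (s * θ) ≤ (1 + Real.exp θ) / 2 := by
  have hconv : ConvexOn ℝ (Set.Icc 0 1) fun s : ℝ => Real.exp (s * θ) :=
    ⟨convex_Icc 0 1, fun x _ y _ a b ha hb hab => by
      simpa [add_mul, mul_assoc] using
        convexOn_exp.2 (Set.mem_univ (x * θ)) (Set.mem_univ (y * θ)) ha hb hab⟩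
  simpa using hconv.intervalIntegral_unitInterval_le
    ((by fun_prop : Continuous fun s : ℝ => Real.exp (s * θ)).intervalIntegrable 0 1)

theorem re_trace_tilted_le_opNorm_sq_general (N : ℕ)
    (A : Matrix (Fin N) (Fin N) ℂ) (hA : A.IsHermitian)
    (htr : Matrix.trace (NormedSpace.exp A) = 1) (θ : ℝ)
    (X : Matrix (Fin N) (Fin N) ℂ) :
    (Matrix.trace (Xᴴ * tilted A θ X)).re ≤
      1/2 * (Real.exp (θ/2) + Real.exp (-θ/2)) * ‖X‖^2 := by
  rw [tilted]
  set F : ℝ → Matrix (Fin N) (Fin N) ℂ :=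
    fun s => NormedSpace.exp (s • A) * X * NormedSpace.exp ((1 - s) • A)
  have hexp : Continuous fun t : ℝ => NormedSpace.exp (t • A) :=
    (differentiable_exp_smul_const ℝ A).continuous
  have hF : Continuous F := (hexp.mul continuous_const).mul (hexp.comp (by fun_prop))
  calc (trace (Xᴴ * (Real.exp (-θ / 2) • ∫ s in (0 : ℝ)..1, Real.exp (s * θ) • F s))).re
      = Real.exp (-θ / 2) * ∫ s in (0 : ℝ)..1, Real.exp (s * θ) * (trace (Xᴴ * F s)).re := by
        rw [mul_smul_comm, trace_smul, Complex.smul_re, smul_eq_mul,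
          re_trace_mul_intervalIntegral _ ((by fun_prop : Continuous _).intervalIntegrable 0 1)]
        simp only [mul_smul_comm, trace_smul, Complex.smul_re, smul_eq_mul]
    _ ≤ Real.exp (-θ / 2) * ∫ s in (0 : ℝ)..1, Real.exp (s * θ) * ‖X‖ ^ 2 := by
        gcongr
        refine intervalIntegral.integral_mono_on zero_le_one
          ((by fun_prop : Continuous _).intervalIntegrable 0 1)
          ((by fun_prop : Continuous _).intervalIntegrable 0 1) fun s ⟨hs0, hs1⟩ => ?_
        gcongr
        exact hA.re_trace_mul_exp_smul_mul_exp_smul_le htr X hs0 hs1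
    _ ≤ Real.exp (-θ / 2) * ((1 + Real.exp θ) / 2 * ‖X‖ ^ 2) := by
        rw [intervalIntegral.integral_mul_const]
        gcongr
        exact Real.intervalIntegral_exp_mul_le θ
    _ = 1/2 * (Real.exp (θ/2) + Real.exp (-θ/2)) * ‖X‖^2 := by
        rw [show Real.exp (θ / 2) = Real.exp (-θ / 2) * Real.exp θ by rw [← Real.exp_add]; ring_nf]
        ring

/-- For a density matrix `ρ = exp(A)` (`A` Hermitian, `Tr(exp A) = 1`),
`Re Tr(X† [ρ]_θ(X)) ≤ (1/2)(e^(θ/2) + e^(−θ/2)) ‖X‖²`, with `‖X‖` the spectral norm. -/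
theorem re_trace_tilted_le_opNorm_sq (N : ℕ) (hN : 1 ≤ N)
    (A : Matrix (Fin N) (Fin N) ℂ) (hA : A.IsHermitian)
    (htr : Matrix.trace (NormedSpace.exp A) = 1) (θ : ℝ)
    (X : Matrix (Fin N) (Fin N) ℂ) :
    (Matrix.trace (Xᴴ * tilted A θ X)).re ≤
      1/2 * (Real.exp (θ/2) + Real.exp (-θ/2)) * ‖X‖^2 :=
  re_trace_tilted_le_opNorm_sq_general N A hA htr θ X
end

section
/- Let N ≥ 1, let A be a Hermitian N×N complex matrix, set ρ = exp(A), let θ ∈ ℝ, and let X be any N×N complex matrix. Then Re Tr(X† · [ρ]_θ(X)) ≤ (1/2) · ( e^(θ/2) · Re Tr(X·X†·ρ) + e^(−θ/2) · Re Tr(X†·X·ρ) ). -/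
open scoped Matrix.Norms.L2Operator

open Matrix

/-!
Diagonalize `A = U diag(λ) U†` and put `wᵢⱼ = |(U†XU)ᵢⱼ|² ≥ 0`. Every trace in the statement is then
a nonnegative combination of exponentials of the eigenvalues:
`Re Tr(X†[ρ]_θ(X)) = ∑ wᵢⱼ ∫₀¹ exp(s(θ/2 + λᵢ) + (1-s)(-θ/2 + λⱼ)) ds`,
`Tr(XX†ρ) = ∑ wᵢⱼ e^λᵢ` and `Tr(X†Xρ) = ∑ wᵢⱼ e^λⱼ`. The inequality follows termwise from the
Hermite–Hadamard bound `∫₀¹ exp(sa + (1-s)b) ds ≤ (eᵃ + eᵇ)/2` for the convex function `exp`.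
-/

open Real in
theorem integral_exp_convexComb_le (a b : ℝ) :
    ∫ s in (0:ℝ)..1, exp (s * a + (1 - s) * b) ≤ (exp a + exp b) / 2 :=
  calc ∫ s in (0:ℝ)..1, exp (s * a + (1 - s) * b)
      ≤ ∫ s in (0:ℝ)..1, (s * exp a + (1 - s) * exp b) := by
        refine intervalIntegral.integral_mono_on zero_le_one
          ((by fun_prop : Continuous _).intervalIntegrable _ _)
          ((by fun_prop : Continuous _).intervalIntegrable _ _) fun s ⟨hs₀, hs₁⟩ => ?_
        simpa using convexOn_exp.2 (Set.mem_univ a) (Set.mem_univ b) hs₀ (sub_nonneg.2 hs₁)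
          (add_sub_cancel s 1)
    _ = (exp a + exp b) / 2 := by
        rw [intervalIntegral.integral_add ((by fun_prop : Continuous _).intervalIntegrable _ _)
          ((by fun_prop : Continuous _).intervalIntegrable _ _),
          intervalIntegral.integral_comp_sub_left (fun s => s * exp b)]
        norm_num
        ring

section

variable {n : Type*} [Fintype n] [DecidableEq n]

theorem re_trace_mul_intervalIntegral (Y : Matrix n n ℂ) {f : ℝ → Matrix n n ℂ} {a b : ℝ}
    (hf : IntervalIntegrable f MeasureTheory.volume a b) :
    (trace (Y * ∫ s in a..b, f s)).re = ∫ s in a..b, (trace (Y * f s)).re :=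
  ((LinearMap.toContinuousLinearMap
    (Complex.reLm ∘ₗ traceLinearMap n ℝ ℂ ∘ₗ LinearMap.mulLeft ℝ Y)).intervalIntegral_comp_comm
    hf).symm

theorem trace_conjTranspose_mul_diagonal_mul_mul_diagonal (B : Matrix n n ℂ) (d e : n → ℝ) :
    trace (Bᴴ * diagonal (fun i => (d i : ℂ)) * B * diagonal (fun j => (e j : ℂ))) =
      ((∑ i, ∑ j, Complex.normSq (B i j) * d i * e j : ℝ) : ℂ) := by
  rw [trace, Finset.sum_comm]
  push_cast
  refine Finset.sum_congr rfl fun j _ => ?_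
  rw [diag_apply, mul_diagonal, mul_apply, Finset.sum_mul]
  refine Finset.sum_congr rfl fun i _ => ?_
  rw [mul_diagonal, conjTranspose_apply, Complex.star_def, Complex.normSq_eq_conj_mul_self]
  ring

theorem trace_conjTranspose_mul_unitary_conj_diagonal (X : Matrix n n ℂ) {U : Matrix n n ℂ}
    (hU : U ∈ unitaryGroup n ℂ) (d e : n → ℝ) :
    trace (Xᴴ * (U * diagonal (fun i => (d i : ℂ)) * Uᴴ * X *
        (U * diagonal (fun j => (e j : ℂ)) * Uᴴ))) =
      ((∑ i, ∑ j, Complex.normSq ((Uᴴ * X * U) i j) * d i * e j : ℝ) : ℂ) := by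
  have hU₁ : Uᴴ * U = 1 := mem_unitaryGroup_iff'.1 hU
  have hU₂ : U * Uᴴ = 1 := mem_unitaryGroup_iff.1 hU
  have hU₂' (M : Matrix n n ℂ) : U * (Uᴴ * M) = M := by
    rw [← Matrix.mul_assoc, hU₂, Matrix.one_mul]
  have hconj : Xᴴ * (U * diagonal (fun i => (d i : ℂ)) * Uᴴ * X *
      (U * diagonal (fun j => (e j : ℂ)) * Uᴴ)) =
        U * ((Uᴴ * X * U)ᴴ * diagonal (fun i => (d i : ℂ)) * (Uᴴ * X * U) *
          diagonal (fun j => (e j : ℂ))) * Uᴴ := by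
    simp only [conjTranspose_mul, conjTranspose_conjTranspose, Matrix.mul_assoc, hU₂']
  rw [hconj, trace_mul_cycle, hU₁, Matrix.one_mul,
    trace_conjTranspose_mul_diagonal_mul_mul_diagonal]

end

namespace Matrix.IsHermitian

section

variable {n : Type*} [Fintype n] [DecidableEq n] {A : Matrix n n ℂ} (hA : A.IsHermitian)

theorem exp_smul (t : ℝ) :
    NormedSpace.exp (t • A) =
      (hA.eigenvectorUnitary : Matrix n n ℂ) *
        diagonal (fun i => (Real.exp (t * hA.eigenvalues i) : ℂ)) *
        (hA.eigenvectorUnitary : Matrix n n ℂ)ᴴ := by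
  have hUinv : (hA.eigenvectorUnitary : Matrix n n ℂ)⁻¹ =
      (hA.eigenvectorUnitary : Matrix n n ℂ)ᴴ :=
    inv_eq_left_inv (Unitary.star_mul_self_of_mem hA.eigenvectorUnitary.2)
  have hsA : t • A = (hA.eigenvectorUnitary : Matrix n n ℂ) *
      diagonal (fun i => ((t * hA.eigenvalues i : ℝ) : ℂ)) *
        (hA.eigenvectorUnitary : Matrix n n ℂ)⁻¹ := by
    conv_lhs => rw [hA.spectral_theorem]
    rw [Unitary.conjStarAlgAut_apply, hUinv, star_eq_conjTranspose, ← smul_mul_assoc,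
      ← mul_smul_comm, ← diagonal_smul]
    congr
    funext i
    simp [Complex.real_smul]
  rw [hsA, exp_conj _ _ Unitary.isUnit_coe, exp_diagonal, hUinv]
  simp only [Pi.exp_def, ← Complex.exp_eq_exp_ℂ, ← Complex.ofReal_exp]

noncomputable def eigenWeight (X : Matrix n n ℂ) (i j : n) : ℝ :=
  Complex.normSq (((hA.eigenvectorUnitary : Matrix n n ℂ)ᴴ * X * hA.eigenvectorUnitary) i j)

theorem eigenWeight_nonneg (X : Matrix n n ℂ) (i j : n) : 0 ≤ hA.eigenWeight X i j :=
  Complex.normSq_nonneg _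

theorem re_trace_mul_exp_smul_mul_exp_smul (X : Matrix n n ℂ) (s t : ℝ) :
    (trace (Xᴴ * (NormedSpace.exp (s • A) * X * NormedSpace.exp (t • A)))).re =
      ∑ i, ∑ j, hA.eigenWeight X i j * Real.exp (s * hA.eigenvalues i + t * hA.eigenvalues j) := by
  rw [hA.exp_smul, hA.exp_smul,
    trace_conjTranspose_mul_unitary_conj_diagonal _ hA.eigenvectorUnitary.2, Complex.ofReal_re]
  simp only [eigenWeight, Real.exp_add, mul_assoc]

theorem re_trace_mul_conjTranspose_mul_exp (X : Matrix n n ℂ) :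
    (trace (X * Xᴴ * NormedSpace.exp A)).re =
      ∑ i, ∑ j, hA.eigenWeight X i j * Real.exp (hA.eigenvalues i) := by
  rw [trace_mul_cycle]
  simpa [trace_mul_comm Xᴴ] using hA.re_trace_mul_exp_smul_mul_exp_smul X 1 0

theorem re_trace_conjTranspose_mul_mul_exp (X : Matrix n n ℂ) :
    (trace (Xᴴ * X * NormedSpace.exp A)).re =
      ∑ i, ∑ j, hA.eigenWeight X i j * Real.exp (hA.eigenvalues j) := by
  simpa [Matrix.mul_assoc] using hA.re_trace_mul_exp_smul_mul_exp_smul X 0 1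

end

theorem re_trace_conjTranspose_mul_tilted {N : ℕ} {A : Matrix (Fin N) (Fin N) ℂ}
    (hA : A.IsHermitian) (θ : ℝ) (X : Matrix (Fin N) (Fin N) ℂ) :
    (trace (Xᴴ * tilted A θ X)).re = ∑ i, ∑ j, hA.eigenWeight X i j * ∫ s in (0:ℝ)..1,
      Real.exp (s * (θ / 2 + hA.eigenvalues i) + (1 - s) * (-θ / 2 + hA.eigenvalues j)) := by
  -- `NormedSpace.exp_continuous` would need a `NormedAlgebra ℚ` instance for this matrix norm.
  have hexp : Continuous (NormedSpace.exp : Matrix (Fin N) (Fin N) ℂ → _) :=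
    continuous_iff_continuousAt.2 fun M => (NormedSpace.exp_analytic (𝕂 := ℂ) M).continuousAt
  have hcont : Continuous fun s : ℝ => Real.exp (s * θ) •
      (NormedSpace.exp (s • A) * X * NormedSpace.exp ((1 - s) • A)) := by fun_prop
  have hintegrand (s : ℝ) : Real.exp (-θ / 2) * (trace (Xᴴ * (Real.exp (s * θ) •
      (NormedSpace.exp (s • A) * X * NormedSpace.exp ((1 - s) • A))))).re =
        ∑ i, ∑ j, hA.eigenWeight X i j *
          Real.exp (s * (θ / 2 + hA.eigenvalues i) + (1 - s) * (-θ / 2 + hA.eigenvalues j)) := by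
    rw [Matrix.mul_smul, trace_smul, Complex.smul_re, hA.re_trace_mul_exp_smul_mul_exp_smul,
      smul_eq_mul]
    simp only [Finset.mul_sum]
    refine Finset.sum_congr rfl fun i _ => Finset.sum_congr rfl fun j _ => ?_
    rw [show s * (θ / 2 + hA.eigenvalues i) + (1 - s) * (-θ / 2 + hA.eigenvalues j) =
      -θ / 2 + s * θ + (s * hA.eigenvalues i + (1 - s) * hA.eigenvalues j) by ring]
    simp only [Real.exp_add]
    ring
  rw [tilted, Matrix.mul_smul, trace_smul, Complex.smul_re,
    re_trace_mul_intervalIntegral _ (hcont.intervalIntegrable 0 1), smul_eq_mul,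
    ← intervalIntegral.integral_const_mul]
  simp only [hintegrand]
  rw [intervalIntegral.integral_finsetSum fun i _ =>
    (by fun_prop : Continuous _).intervalIntegrable _ _]
  refine Finset.sum_congr rfl fun i _ => ?_
  rw [intervalIntegral.integral_finsetSum fun j _ =>
    (by fun_prop : Continuous _).intervalIntegrable _ _]
  simp only [intervalIntegral.integral_const_mul]

end Matrix.IsHermitian

theorem re_trace_tilted_le_general (N : ℕ)
    (A : Matrix (Fin N) (Fin N) ℂ) (hA : A.IsHermitian) (θ : ℝ)
    (X : Matrix (Fin N) (Fin N) ℂ) :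
    (Matrix.trace (Xᴴ * tilted A θ X)).re ≤
      1/2 * (Real.exp (θ/2) * (Matrix.trace (X * Xᴴ * NormedSpace.exp A)).re
        + Real.exp (-θ/2) * (Matrix.trace (Xᴴ * X * NormedSpace.exp A)).re) :=
  calc (trace (Xᴴ * tilted A θ X)).re
      = ∑ i, ∑ j, hA.eigenWeight X i j * ∫ s in (0:ℝ)..1,
          Real.exp (s * (θ / 2 + hA.eigenvalues i) + (1 - s) * (-θ / 2 + hA.eigenvalues j)) :=
        hA.re_trace_conjTranspose_mul_tilted θ X
    _ ≤ ∑ i, ∑ j, hA.eigenWeight X i j *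
          ((Real.exp (θ / 2 + hA.eigenvalues i) + Real.exp (-θ / 2 + hA.eigenvalues j)) / 2) := by
        gcongr with i _ j _
        · exact hA.eigenWeight_nonneg X i j
        · exact integral_exp_convexComb_le _ _
    _ = _ := by
        rw [hA.re_trace_mul_conjTranspose_mul_exp, hA.re_trace_conjTranspose_mul_mul_exp]
        simp only [Finset.mul_sum, ← Finset.sum_add_distrib, Real.exp_add]
        refine Finset.sum_congr rfl fun i _ => Finset.sum_congr rfl fun j _ => ?_
        ring

/-- For `ρ = exp(A)` with `A` Hermitian,
`Re Tr(X† [ρ]_θ(X)) ≤ (1/2)(e^(θ/2) Re Tr(X X† ρ) + e^(−θ/2) Re Tr(X† X ρ))`. -/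
theorem re_trace_tilted_le (N : ℕ) (hN : 1 ≤ N)
    (A : Matrix (Fin N) (Fin N) ℂ) (hA : A.IsHermitian) (θ : ℝ)
    (X : Matrix (Fin N) (Fin N) ℂ) :
    (Matrix.trace (Xᴴ * tilted A θ X)).re ≤
      1/2 * (Real.exp (θ/2) * (Matrix.trace (X * Xᴴ * NormedSpace.exp A)).re
        + Real.exp (-θ/2) * (Matrix.trace (Xᴴ * X * NormedSpace.exp A)).re) :=
  re_trace_tilted_le_general N A hA θ X
end

section
/- Let N ≥ 1, let x, y : Fin N → ℝ, and let χ be a permutation of Fin N such that for all indices n, m, if xₙ ≥ xₘ then y_{χ(n)} ≥ y_{χ(m)}. Then Σₙ |xₙ − yₙ| ≥ Σₙ |xₙ − y_{χ(n)}|. -/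
/-!
The cost `φ a b = |a - b|` has the Monge (exchange) property: for `a ≤ a'` and `b ≤ b'`, matching
`a'` with `b'` and `a` with `b` costs no more than the crossed matching. As in the rearrangement
inequality, any permutation is undone one transposition at a time: take the index `a` maximising
`x` (ties broken by the larger `z`), swap the value `z` sent to `a` back into place, which by the
exchange property does not increase the cost, and recurse on the remaining indices.
-/

open Finset Equiv

theorem abs_sub_add_abs_sub_le_abs_sub_add_abs_sub {a a' b b' : ℝ} (ha : a ≤ a') (hb : b ≤ b') :
    |a' - b'| + |a - b| ≤ |a' - b| + |a - b'| := by
  rcases abs_cases (a' - b') with ⟨h1, _⟩ | ⟨h1, _⟩ <;>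
    rcases abs_cases (a - b) with ⟨h2, _⟩ | ⟨h2, _⟩ <;>
      linarith [le_abs_self (a' - b), neg_abs_le (a' - b), le_abs_self (a - b'), neg_abs_le (a - b')]

theorem Equiv.Perm.setOf_trans_swap_apply_ne_subset {ι : Type*} [DecidableEq ι] {σ : Perm ι}
    {a : ι} {s : Set ι} (hσ : {i | σ i ≠ i} ⊆ insert a s) :
    {i | (σ.trans (swap a (σ a))) i ≠ i} ⊆ s := by
  intro i hi
  simp only [Set.mem_ofPred_eq, coe_trans, Function.comp_apply] at hi
  obtain rfl | hia := eq_or_ne i a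
  · exact absurd (swap_apply_right _ _) hi
  have hσi : σ i ≠ i := fun hσi => hi <| by
    rw [hσi, swap_apply_of_ne_of_ne hia fun h => hia (σ.injective (hσi.trans h))]
  exact (hσ hσi).resolve_left hia

variable {ι α β : Type*} [LinearOrder α] [LinearOrder β] {s : Set ι} {x : ι → α} {z : ι → β}

theorem MonovaryOn.le_and_le_of_toLex_le (hzx : MonovaryOn z x s) {i j : ι} (hi : i ∈ s)
    (hj : j ∈ s) (hij : toLex (x i, z i) ≤ toLex (x j, z j)) : x i ≤ x j ∧ z i ≤ z j := by
  rcases Prod.Lex.toLex_le_toLex.1 hij with hlt | ⟨heq, hle⟩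
  · exact ⟨hlt.le, hzx hi hj hlt⟩
  · exact ⟨heq.le, hle⟩

variable {M : Type*} [AddCommMonoid M] [PartialOrder M] [IsOrderedAddMonoid M] {φ : α → β → M}

theorem MonovaryOn.sum_le_sum_comp_perm_of_exchange
    (hφ : ∀ ⦃a a' b b'⦄, a ≤ a' → b ≤ b' → φ a' b' + φ a b ≤ φ a' b + φ a b')
    {s : Finset ι} (hzx : MonovaryOn z x s) {σ : Perm ι} (hσ : {i | σ i ≠ i} ⊆ s) :
    ∑ i ∈ s, φ (x i) (z i) ≤ ∑ i ∈ s, φ (x i) (z (σ i)) := by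
  classical
  induction s using induction_on_max_value (fun i ↦ toLex (x i, z i)) generalizing σ with
  | empty => simp
  | insert a s has hmax ih =>
    set τ := σ.trans (swap a (σ a))
    have hτs := Perm.setOf_trans_swap_apply_ne_subset (by simpa using hσ)
    rw [sum_insert has, sum_insert has]
    grw [ih (hzx.subset (by simp)) hτs]
    obtain hσa | hσa := eq_or_ne (σ a) a
    · simp [hσa]
    set b := σ.symm a
    have hσ' : ∀ i, σ i ≠ i → i ≠ a → i ∈ s := fun i h hia =>
      (mem_insert.1 (hσ h)).resolve_left hia
    have hba : b ≠ a := fun h => hσa (by rw [← h, σ.apply_symm_apply, h])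
    have hb : b ∈ s := hσ' b (by simpa [b] using hba.symm) hba
    have hσb : σ b = a := σ.apply_symm_apply a
    have hτb : τ b = σ a := by simp [τ, hσb]
    have hτ_eq : ∀ i ∈ s.erase b, τ i = σ i := by
      intro i hi
      obtain ⟨hib, his⟩ := mem_erase.1 hi
      refine swap_apply_of_ne_of_ne (fun h => hib ?_)
        (σ.injective.ne (ne_of_mem_of_not_mem his has))
      simp [b, ← h]
    rw [← add_sum_erase _ _ hb, ← add_sum_erase _ _ hb,
      sum_congr rfl fun i hi => by rw [hτ_eq i hi], hτb, hσb, ← add_assoc, ← add_assoc]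
    have hσas : σ a ∈ s := hσ' _ (σ.injective.ne hσa) hσa
    have hxb := (hzx.le_and_le_of_toLex_le (mem_insert_of_mem hb) (mem_insert_self a s)
      (hmax b hb)).1
    have hzσa := (hzx.le_and_le_of_toLex_le (mem_insert_of_mem hσas) (mem_insert_self a s)
      (hmax _ hσas)).2
    exact add_le_add_left (hφ hxb hzσa) _

theorem sum_abs_sub_perm_le_general (N : ℕ) (x y : Fin N → ℝ)
    (χ : Equiv.Perm (Fin N))
    (h : ∀ n m : Fin N, x m ≤ x n → y (χ m) ≤ y (χ n)) :
    ∑ n, |x n - y (χ n)| ≤ ∑ n, |x n - y n| := by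
  have hmono : Monovary (y ∘ χ) x := fun m n hmn => h n m hmn.le
  have key := (hmono.monovaryOn (univ : Finset (Fin N))).sum_le_sum_comp_perm_of_exchange
    (fun _ _ _ _ => abs_sub_add_abs_sub_le_abs_sub_add_abs_sub) (σ := χ.symm) (by simp)
  simpa using key

/-- If `χ` is a permutation pairing `y` to `x` in a similarly ordered way
(`xₙ ≥ xₘ → y_{χ(n)} ≥ y_{χ(m)}`), then `Σₙ |xₙ − yₙ| ≥ Σₙ |xₙ − y_{χ(n)}|`. -/
theorem sum_abs_sub_perm_le (N : ℕ) (hN : 1 ≤ N) (x y : Fin N → ℝ)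
    (χ : Equiv.Perm (Fin N))
    (h : ∀ n m : Fin N, x m ≤ x n → y (χ m) ≤ y (χ n)) :
    ∑ n, |x n - y (χ n)| ≤ ∑ n, |x n - y n| :=
  sum_abs_sub_perm_le_general N x y χ h
end

section
/- Let N ≥ 1, let R be an N×N real matrix with R_{mn} ≥ 0 for all m ≠ n, let p^eq : Fin N → ℝ with p^eq_n > 0 for all n satisfy the detailed balance condition R_{nm}·p^eq_m = R_{mn}·p^eq_n for all n, m, and let p : Fin N → ℝ with p_n > 0 for all n. Define f_n := −(ln p_n − ln p^eq_n − 1). Then for every index n: Σ_{m≠n} R_{nm} · p^eq_m · Φ(p_n/p^eq_n, p_m/p^eq_m) · (f_n − f_m) = Σ_{m≠n} ( R_{nm}·p_m − R_{mn}·p_n ), where Φ is the logarithmic mean. -/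
open Real

theorem logMean_mul_log_sub_log {x y : ℝ} (hx : 0 < x) (hy : 0 < y) :
    logMean x y * (log x - log y) = x - y := by
  unfold logMean
  split_ifs with hxy
  · simp [hxy]
  · have hlog : log x - log y ≠ 0 :=
      sub_ne_zero.mpr fun h => hxy (log_injOn_pos hx hy h)
    exact div_mul_cancel₀ _ hlog

theorem net_flux_eq_of_detailed_balance {K : Type*} [Field K] {rₙₘ rₘₙ qₙ qₘ pₙ pₘ : K}
    (hqₙ : qₙ ≠ 0) (hqₘ : qₘ ≠ 0) (hdb : rₙₘ * qₘ = rₘₙ * qₙ) :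
    rₙₘ * qₘ * (pₘ / qₘ - pₙ / qₙ) = rₙₘ * pₘ - rₘₙ * pₙ := by
  field_simp
  linear_combination (-pₙ) * hdb

theorem master_equation_alternative_form_general (N : ℕ)
    (R : Matrix (Fin N) (Fin N) ℝ)
    (peq : Fin N → ℝ) (hpeq : ∀ n, 0 < peq n)
    (hdb : ∀ n m : Fin N, R n m * peq m = R m n * peq n)
    (p : Fin N → ℝ) (hp : ∀ n, 0 < p n)
    (f : Fin N → ℝ) (hf : ∀ n, f n = -(Real.log (p n) - Real.log (peq n) - 1)) :
    ∀ n : Fin N,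
      ∑ m ∈ Finset.univ.filter (· ≠ n),
          R n m * peq m * logMean (p n / peq n) (p m / peq m) * (f n - f m)
      = ∑ m ∈ Finset.univ.filter (· ≠ n), (R n m * p m - R m n * p n) := by
  intro n
  refine Finset.sum_congr rfl fun m _ => ?_
  have hf_sub : f n - f m = -(log (p n / peq n) - log (p m / peq m)) := by
    rw [hf, hf, log_div (hp m).ne' (hpeq m).ne', log_div (hp n).ne' (hpeq n).ne']
    ring
  calc R n m * peq m * logMean (p n / peq n) (p m / peq m) * (f n - f m)
      = R n m * peq m * -(logMean (p n / peq n) (p m / peq m)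
          * (log (p n / peq n) - log (p m / peq m))) := by rw [hf_sub]; ring
    _ = R n m * peq m * (p m / peq m - p n / peq n) := by
      rw [logMean_mul_log_sub_log (div_pos (hp n) (hpeq n)) (div_pos (hp m) (hpeq m)), neg_sub]
    _ = R n m * p m - R m n * p n :=
      net_flux_eq_of_detailed_balance (hpeq n).ne' (hpeq m).ne' (hdb n m)

/-- With `fₙ = −(ln pₙ − ln p^eqₙ − 1)` and detailed balance `R_{nm} p^eq_m = R_{mn} p^eq_n`,
`Σ_{m≠n} R_{nm} p^eq_m Φ(pₙ/p^eqₙ, pₘ/p^eqₘ) (fₙ − fₘ) = Σ_{m≠n} (R_{nm} pₘ − R_{mn} pₙ)`. -/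
theorem master_equation_alternative_form (N : ℕ) (hN : 1 ≤ N)
    (R : Matrix (Fin N) (Fin N) ℝ) (hR : ∀ m n : Fin N, m ≠ n → 0 ≤ R m n)
    (peq : Fin N → ℝ) (hpeq : ∀ n, 0 < peq n)
    (hdb : ∀ n m : Fin N, R n m * peq m = R m n * peq n)
    (p : Fin N → ℝ) (hp : ∀ n, 0 < p n)
    (f : Fin N → ℝ) (hf : ∀ n, f n = -(Real.log (p n) - Real.log (peq n) - 1)) :
    ∀ n : Fin N,
      ∑ m ∈ Finset.univ.filter (· ≠ n),
          R n m * peq m * logMean (p n / peq n) (p m / peq m) * (f n - f m)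
      = ∑ m ∈ Finset.univ.filter (· ≠ n), (R n m * p m - R m n * p n) :=
  master_equation_alternative_form_general N R peq hpeq hdb p hp f hf
end

section
/- Let N ≥ 1, let R be an N×N real matrix with R_{mn} ≥ 0 for all m ≠ n, let p^eq : Fin N → ℝ with p^eq_n > 0 satisfy detailed balance R_{nm}·p^eq_m = R_{mn}·p^eq_n for all n, m, and let p : Fin N → ℝ with p_n > 0. Assume irreducibility: the undirected graph on Fin N with an edge between n and m (n ≠ m) whenever R_{nm} > 0 is connected. Define the linear map K_p on ℝ^N by (K_p v)_n := Σ_{m≠n} R_{nm} · p^eq_m · Φ(p_n/p^eq_n, p_m/p^eq_m) · (v_n − v_m). Then for every v ∈ ℝ^N, K_p v = 0 if and only if v is a constant vector, i.e., there exists c ∈ ℝ with v_n = c for all n. -/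
/-- The Onsager-type matrix `K_p` acting on a vector `v`:
`(K_p v)_n = Σ_{m≠n} R_{nm} p^eq_m Φ(p_n/p^eq_n, p_m/p^eq_m) (v_n − v_m)`. -/
noncomputable def Kop {N : ℕ} (R : Matrix (Fin N) (Fin N) ℝ) (peq p v : Fin N → ℝ) :
    Fin N → ℝ :=
  fun n => ∑ m ∈ Finset.univ.filter (· ≠ n),
    R n m * peq m * logMean (p n / peq n) (p m / peq m) * (v n - v m)

lemma logMean_pos {x y : ℝ} (hx : 0 < x) (hy : 0 < y) : 0 < logMean x y := by
  unfold logMean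
  split_ifs with hxy
  · exact hx
  · rcases lt_or_gt_of_ne hxy with h | h
    · exact div_pos_of_neg_of_neg (by linarith) (by linarith [Real.log_lt_log hx h])
    · exact div_pos (by linarith) (by linarith [Real.log_lt_log hy h])

namespace SimpleGraph

variable {V : Type*} {G : SimpleGraph V}

lemma Reachable.of_forall_adj {P : V → Prop} (hP : ∀ u w, G.Adj u w → P u → P w) {u v : V}
    (huv : G.Reachable u v) (hu : P u) : P v := by
  rw [reachable_iff_reflTransGen] at huv
  induction huv with
  | refl => exact hu
  | tail _ hadj ih => exact hP _ _ hadj ih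

lemma Connected.exists_forall_eq_of_adj_max [Finite V] {α : Type*} [LinearOrder α] {f : V → α}
    (hG : G.Connected) (hf : ∀ u w, G.Adj u w → (∀ x, f x ≤ f u) → f w = f u) :
    ∃ c, ∀ v, f v = c := by
  have := hG.nonempty
  obtain ⟨u₀, hu₀⟩ := Finite.exists_max f
  refine ⟨f u₀, fun v => (hG.preconnected u₀ v).of_forall_adj (P := (f · = f u₀)) ?_ rfl⟩
  intro u w hadj hu
  rw [hf u w hadj (hu ▸ hu₀), hu]

end SimpleGraph

lemma pos_of_pos_of_detailed_balance {N : ℕ} {R : Matrix (Fin N) (Fin N) ℝ} {peq : Fin N → ℝ}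
    (hpeq : ∀ n, 0 < peq n) (hdb : ∀ n m : Fin N, R n m * peq m = R m n * peq n) {n m : Fin N}
    (h : 0 < R m n) : 0 < R n m :=
  pos_of_mul_pos_left ((hdb n m).symm ▸ mul_pos h (hpeq n)) (hpeq m).le

lemma eq_of_Kop_apply_eq_zero_of_forall_le {N : ℕ} {R : Matrix (Fin N) (Fin N) ℝ}
    (hR : ∀ m n : Fin N, m ≠ n → 0 ≤ R m n) {peq p v : Fin N → ℝ}
    (hpeq : ∀ n, 0 < peq n) (hp : ∀ n, 0 < p n) {k m : Fin N}
    (hk : Kop R peq p v k = 0) (hmax : ∀ x, v x ≤ v k) (hkm : k ≠ m) (hRkm : 0 < R k m) :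
    v m = v k := by
  have hΦ : ∀ x, 0 < logMean (p k / peq k) (p x / peq x) := fun x =>
    logMean_pos (div_pos (hp k) (hpeq k)) (div_pos (hp x) (hpeq x))
  have hterms_nonneg : ∀ x ∈ Finset.univ.filter (· ≠ k),
      0 ≤ R k x * peq x * logMean (p k / peq k) (p x / peq x) * (v k - v x) := by
    intro x hx
    have hRkx := hR k x (Finset.mem_filter.1 hx).2.symm
    exact mul_nonneg (mul_nonneg (mul_nonneg hRkx (hpeq x).le) (hΦ x).le) (sub_nonneg.2 (hmax x))
  have hterm := (Finset.sum_eq_zero_iff_of_nonneg hterms_nonneg).1 hk m (by simp [hkm.symm])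
  have hcoeff : R k m * peq m * logMean (p k / peq k) (p m / peq m) ≠ 0 :=
    (mul_pos (mul_pos hRkm (hpeq m)) (hΦ m)).ne'
  linarith [(mul_eq_zero.1 hterm).resolve_left hcoeff]

theorem Kop_eq_zero_iff_const_general (N : ℕ)
    (R : Matrix (Fin N) (Fin N) ℝ) (hR : ∀ m n : Fin N, m ≠ n → 0 ≤ R m n)
    (peq : Fin N → ℝ) (hpeq : ∀ n, 0 < peq n)
    (hdb : ∀ n m : Fin N, R n m * peq m = R m n * peq n)
    (p : Fin N → ℝ) (hp : ∀ n, 0 < p n)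
    (hconn : (SimpleGraph.fromRel (fun n m : Fin N => 0 < R n m)).Connected)
    (v : Fin N → ℝ) :
    Kop R peq p v = 0 ↔ ∃ c : ℝ, ∀ n, v n = c := by
  constructor
  · intro hK
    refine hconn.exists_forall_eq_of_adj_max fun k m hadj hmax => ?_
    obtain ⟨hkm, hpos | hpos⟩ := hadj
    · exact eq_of_Kop_apply_eq_zero_of_forall_le hR hpeq hp (congrFun hK k) hmax hkm hpos
    · exact eq_of_Kop_apply_eq_zero_of_forall_le hR hpeq hp (congrFun hK k) hmax hkm
        (pos_of_pos_of_detailed_balance hpeq hdb hpos)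
  · rintro ⟨c, hc⟩
    funext n
    simp [Kop, hc]

/-- For an irreducible rate matrix satisfying detailed balance, `K_p v = 0` iff `v` is
a constant vector. -/
theorem Kop_eq_zero_iff_const (N : ℕ) (hN : 1 ≤ N)
    (R : Matrix (Fin N) (Fin N) ℝ) (hR : ∀ m n : Fin N, m ≠ n → 0 ≤ R m n)
    (peq : Fin N → ℝ) (hpeq : ∀ n, 0 < peq n)
    (hdb : ∀ n m : Fin N, R n m * peq m = R m n * peq n)
    (p : Fin N → ℝ) (hp : ∀ n, 0 < p n)
    (hconn : (SimpleGraph.fromRel (fun n m : Fin N => 0 < R n m)).Connected)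
    (v : Fin N → ℝ) :
    Kop R peq p v = 0 ↔ ∃ c : ℝ, ∀ n, v n = c :=
  Kop_eq_zero_iff_const_general N R hR peq hpeq hdb p hp hconn v
end

section
/- Let N ≥ 1, let R be an N×N real matrix with R_{mn} ≥ 0 for all m ≠ n, let p^eq : Fin N → ℝ with p^eq_n > 0 satisfy detailed balance R_{nm}·p^eq_m = R_{mn}·p^eq_n, and let p : Fin N → ℝ with p_n > 0. Define (K_p v)_n := Σ_{m≠n} R_{nm} · p^eq_m · Φ(p_n/p^eq_n, p_m/p^eq_m) · (v_n − v_m). Then for every w ∈ ℝ^N with |w_n| ≤ 1 for all n, ⟨w, K_p w⟩ ≤ 2 · Σ_{n≠m} R_{mn} · p_n, where ⟨x,y⟩ = Σ_n x_n y_n and the right-hand sum is over all ordered pairs (n,m) with n ≠ m. -/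
open Finset Real

theorem Real.two_mul_div_add_two_le_log_one_add {a : ℝ} (ha : 0 ≤ a) :
    2 * a / (a + 2) ≤ log (1 + a) := by
  have h := le_hasSum (hasSum_log_one_add ha) 0 fun k _ => by positivity
  simpa [mul_div_assoc] using h

theorem Real.two_mul_sub_div_add_le_log_sub_log {x y : ℝ} (hy : 0 < y) (hxy : y ≤ x) :
    2 * (x - y) / (x + y) ≤ log x - log y := by
  have h := two_mul_div_add_two_le_log_one_add (a := x / y - 1)
    (sub_nonneg.mpr ((one_le_div hy).mpr hxy))
  rw [add_sub_cancel, log_div (by linarith) hy.ne'] at h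
  convert h using 1
  field_simp
  ring

theorem logMean_comm (x y : ℝ) : logMean x y = logMean y x := by
  unfold logMean
  split_ifs with h h' h'
  · exact h
  · exact absurd h.symm h'
  · exact absurd h'.symm h
  · rw [← neg_sub x, ← neg_sub (log x), neg_div_neg_eq]

theorem logMean_nonneg {x y : ℝ} (hx : 0 < x) (hy : 0 < y) : 0 ≤ logMean x y := by
  wlog hxy : y ≤ x generalizing x y
  · rw [logMean_comm]; exact this hy hx (le_of_not_ge hxy)
  unfold logMean
  split_ifs
  · exact hx.le
  · exact div_nonneg (by linarith) (by linarith [log_le_log hy hxy])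

theorem logMean_le_add_div_two {x y : ℝ} (hx : 0 < x) (hy : 0 < y) :
    logMean x y ≤ (x + y) / 2 := by
  wlog hxy : y < x generalizing x y
  · rcases (not_lt.mp hxy).eq_or_lt with rfl | hlt
    · simp [logMean]
    · rw [logMean_comm, add_comm]; exact this hy hx hlt
  have hlog : 0 < log x - log y := sub_pos.mpr (log_lt_log hy hxy)
  have h := two_mul_sub_div_add_le_log_sub_log hy hxy.le
  rw [logMean, if_neg hxy.ne', div_le_div_iff₀ hlog two_pos]
  rw [div_le_iff₀ (by linarith)] at h
  linarith

theorem mul_logMean_div_le_of_detailed_balance {r r' q q' a b : ℝ} (hr : 0 ≤ r) (hq : 0 < q)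
    (hq' : 0 < q') (ha : 0 < a) (hb : 0 < b) (hdb : r * q' = r' * q) :
    r * q' * logMean (a / q) (b / q') ≤ (r' * a + r * b) / 2 := calc
  r * q' * logMean (a / q) (b / q') ≤ r * q' * ((a / q + b / q') / 2) :=
    mul_le_mul_of_nonneg_left (logMean_le_add_div_two (by positivity) (by positivity))
      (by positivity)
  _ = (r * q' / q * a + r * b) / 2 := by field_simp
  _ = (r' * a + r * b) / 2 := by rw [hdb, mul_div_cancel_right₀ _ hq.ne']

theorem mul_sub_le_two {s t : ℝ} (hs : |s| ≤ 1) (ht : |t| ≤ 1) : s * (s - t) ≤ 2 := by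
  rw [abs_le] at hs ht
  nlinarith

theorem Finset.sum_sum_filter_ne_comm {α M : Type*} [Fintype α] [DecidableEq α]
    [AddCommMonoid M] (f : α → α → M) :
    ∑ n, ∑ m ∈ univ.filter (· ≠ n), f n m = ∑ n, ∑ m ∈ univ.filter (· ≠ n), f m n :=
  Finset.sum_comm' fun _ _ => by simp [ne_comm]

theorem inner_Kop_le_two_mul_activity_general (N : ℕ)
    (R : Matrix (Fin N) (Fin N) ℝ) (hR : ∀ m n : Fin N, m ≠ n → 0 ≤ R m n)
    (peq : Fin N → ℝ) (hpeq : ∀ n, 0 < peq n)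
    (hdb : ∀ n m : Fin N, R n m * peq m = R m n * peq n)
    (p : Fin N → ℝ) (hp : ∀ n, 0 < p n)
    (w : Fin N → ℝ) (hw : ∀ n, |w n| ≤ 1) :
    ∑ n, w n * Kop R peq p w n
      ≤ 2 * ∑ n, ∑ m ∈ Finset.univ.filter (· ≠ n), R m n * p n := by
  have hterm : ∀ n, ∀ m ∈ univ.filter (· ≠ n),
      R n m * peq m * logMean (p n / peq n) (p m / peq m) * (w n * (w n - w m))
        ≤ R m n * p n + R n m * p m := by
    intro n m hm
    have hmn : m ≠ n := (mem_filter.mp hm).2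
    have hS0 : 0 ≤ R n m * peq m * logMean (p n / peq n) (p m / peq m) :=
      mul_nonneg (mul_nonneg (hR n m hmn.symm) (hpeq m).le)
        (logMean_nonneg (div_pos (hp n) (hpeq n)) (div_pos (hp m) (hpeq m)))
    calc _ ≤ R n m * peq m * logMean (p n / peq n) (p m / peq m) * 2 :=
          mul_le_mul_of_nonneg_left (mul_sub_le_two (hw n) (hw m)) hS0
      _ ≤ R m n * p n + R n m * p m := by
          linarith [mul_logMean_div_le_of_detailed_balance (hR n m hmn.symm) (hpeq n) (hpeq m)
            (hp n) (hp m) (hdb n m)]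
  calc ∑ n, w n * Kop R peq p w n
      = ∑ n, ∑ m ∈ univ.filter (· ≠ n),
          R n m * peq m * logMean (p n / peq n) (p m / peq m) * (w n * (w n - w m)) := by
        simp only [Kop, mul_sum]
        congr! 2 with n - m
        ring
    _ ≤ ∑ n, ∑ m ∈ univ.filter (· ≠ n), (R m n * p n + R n m * p m) :=
        sum_le_sum fun n _ => sum_le_sum (hterm n)
    _ = 2 * ∑ n, ∑ m ∈ univ.filter (· ≠ n), R m n * p n := by
        simp only [sum_add_distrib]
        rw [sum_sum_filter_ne_comm (fun n m => R n m * p m)]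
        ring

/-- For every `w` with `|w_n| ≤ 1`, `⟨w, K_p w⟩ ≤ 2 Σ_{n≠m} R_{mn} p_n` (the dynamical
activity bound). -/
theorem inner_Kop_le_two_mul_activity (N : ℕ) (hN : 1 ≤ N)
    (R : Matrix (Fin N) (Fin N) ℝ) (hR : ∀ m n : Fin N, m ≠ n → 0 ≤ R m n)
    (peq : Fin N → ℝ) (hpeq : ∀ n, 0 < peq n)
    (hdb : ∀ n m : Fin N, R n m * peq m = R m n * peq n)
    (p : Fin N → ℝ) (hp : ∀ n, 0 < p n)
    (w : Fin N → ℝ) (hw : ∀ n, |w n| ≤ 1) :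
    ∑ n, w n * Kop R peq p w n
      ≤ 2 * ∑ n, ∑ m ∈ Finset.univ.filter (· ≠ n), R m n * p n :=
  inner_Kop_le_two_mul_activity_general N R hR peq hpeq hdb p hp w hw
end
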